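/- Let x_0, x_1, ..., x_N and x* be points in a metric space with d(x_0, x_N) > 0 and d(x_0, x*) > 0, with N ≥ 2. Define η = (Σ_{k=0}^{N-2} d(x_k, x_{k+1}) + d(x_{N-1}, x*)) / d(x_0, x*) and η_sub = (Σ_{k=0}^{N-1} d(x_k, x_{k+1})) / d(x_0, x_N). If η ≥ 1, then (η - η_sub)/η ≤ 2·d(x_N, x*)/d(x_0, x_N). -/

import Mathlib

/-!
Write `P = Σ_{k<N-1} d(x_k,x_{k+1}) + d(x_{N-1},x*)` and `Q = Σ_{k<N} d(x_k,x_{k+1})`, so that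
`η = P / d(x₀,x*)` and `η_sub = Q / d(x₀,x_N)`. The two triangle inequalities through `x_N` give
`d(x₀,x_N) ≤ d(x₀,x*) + d(x_N,x*)` and `P ≤ Q + d(x_N,x*)`, while `η ≥ 1` says `d(x₀,x*) ≤ P`.
Clearing denominators, the claim becomes `d(x₀,x_N) P - d(x₀,x*) Q ≤ 2 d(x_N,x*) P`, which is a
linear consequence of these three bounds.
-/

lemma relative_gap_le {Dstar D e P Q : ℝ} (hDstar : 0 < Dstar) (hD : 0 < D) (he : 0 ≤ e)
    (hP : Dstar ≤ P) (hD_le : D ≤ Dstar + e) (hP_le : P ≤ Q + e) :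
    (P / Dstar - Q / D) / (P / Dstar) ≤ 2 * e / D := by
  have hPpos : 0 < P := hDstar.trans_le hP
  have key : D * P - Dstar * Q ≤ 2 * e * P := calc
    D * P - Dstar * Q ≤ (Dstar + e) * P - Dstar * Q := by gcongr
    _ = Dstar * (P - Q) + e * P := by ring
    _ ≤ Dstar * e + e * P := by gcongr; linarith
    _ ≤ 2 * e * P := by linarith [mul_le_mul_of_nonneg_left hP he]
  rw [div_le_div_iff₀ (by positivity) hD]
  field_simp
  linarith

theorem stmt4_general {X : Type*} [MetricSpace X] (N : ℕ)
    (x : ℕ → X) (xstar : X)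
    (h0N : 0 < dist (x 0) (x N)) (h0s : 0 < dist (x 0) xstar)
    (η ηsub : ℝ)
    (hη : η = ((∑ k ∈ Finset.range (N - 1), dist (x k) (x (k + 1))) +
        dist (x (N - 1)) xstar) / dist (x 0) xstar)
    (hηsub : ηsub = (∑ k ∈ Finset.range N, dist (x k) (x (k + 1))) /
        dist (x 0) (x N))
    (hη1 : 1 ≤ η) :
    (η - ηsub) / η ≤ 2 * dist (x N) xstar / dist (x 0) (x N) := by
  obtain ⟨M, rfl⟩ : ∃ M, N = M + 1 :=
    Nat.exists_eq_succ_of_ne_zero (by rintro rfl; simp at h0N)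
  rw [Nat.add_sub_cancel] at hη
  rw [Finset.sum_range_succ] at hηsub
  subst hη hηsub
  refine relative_gap_le h0s h0N dist_nonneg ?_ (dist_triangle_right _ _ _) ?_
  · rwa [one_le_div h0s] at hη1
  · linarith [dist_triangle (x M) (x (M + 1)) xstar]

/-- Suboptimal-endpoint ESL comparison: with
`η = (Σ_{k≤N-2} d(x_k,x_{k+1}) + d(x_{N-1}, x*)) / d(x₀, x*)` and
`η_sub = (Σ_{k<N} d(x_k,x_{k+1})) / d(x₀, x_N)`, if `η ≥ 1` then
`(η - η_sub)/η ≤ 2 d(x_N, x*) / d(x₀, x_N)`. -/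
theorem stmt4 {X : Type*} [MetricSpace X] (N : ℕ) (hN : 2 ≤ N)
    (x : ℕ → X) (xstar : X)
    (h0N : 0 < dist (x 0) (x N)) (h0s : 0 < dist (x 0) xstar)
    (η ηsub : ℝ)
    (hη : η = ((∑ k ∈ Finset.range (N - 1), dist (x k) (x (k + 1))) +
        dist (x (N - 1)) xstar) / dist (x 0) xstar)
    (hηsub : ηsub = (∑ k ∈ Finset.range N, dist (x k) (x (k + 1))) /
        dist (x 0) (x N))
    (hη1 : 1 ≤ η) :
    (η - ηsub) / η ≤ 2 * dist (x N) xstar / dist (x 0) (x N) :=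
  stmt4_general N x xstar h0N h0s η ηsub hη hηsub hη1
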